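/- Let D ∈ ℝ^{m×m} be symmetric positive definite with extreme eigenvalues ψ_min, ψ_max, let L ∈ ℝ^{m×m} have extreme singular values σ_min, σ_max, and let G = HᵀR^{-1}H be symmetric positive semidefinite with extreme eigenvalues ν_min, ν_max. Then every positive eigenvalue ζ of A₂ = [[D, L], [Lᵀ, −G]] satisfies (1/2)(ψ_min − ν_max + sqrt((ψ_min + ν_max)² + 4σ_min²)) ≤ ζ ≤ (1/2)(ψ_max − ν_min + sqrt((ψ_max + ν_min)² + 4σ_max²)). -/

import Mathlib

/-!
Write an eigenvector of `A₂` for the eigenvalue `ζ > 0` as `(x, y)`, so that `D x + L y = ζ x` and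
`Lᵀ x = (ζ + G) y`. Then `p := ⟪x, L y⟫ = ⟪y, (ζ + G) y⟫ ≥ 0`, which vanishes only for `y = 0`,
so `x ≠ 0`; moreover `⟪x, D x⟫ + p = ζ ‖x‖²`. Rayleigh bounds give
`σ_min² ‖x‖² ≤ ‖Lᵀ x‖² = ‖(ζ + G) y‖² ≤ (ζ + ν_max) p ≤ (ζ + ν_max) (ζ - ψ_min) ‖x‖²`
(the smallest eigenvalues of `LᵀL` and `LLᵀ` agree since the two have the same characteristic
polynomial), while `(ζ - ψ_max) ‖x‖² ≤ p`, `(ζ + ν_min) ‖y‖² ≤ p` and Cauchy–Schwarz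
`p² ≤ σ_max² ‖x‖² ‖y‖²` give `(ζ - ψ_max) (ζ + ν_min) ≤ σ_max²`. Solving these two quadratic
inequalities for `ζ` gives the bounds.
-/

open Matrix

namespace Matrix.IsHermitian

variable {n : Type*} [Fintype n] [DecidableEq n] {A : Matrix n n ℝ} (hA : A.IsHermitian)

lemma star_eigenvectorUnitary_mulVec_dotProduct (x y : n → ℝ) :
    (star (hA.eigenvectorUnitary : Matrix n n ℝ) *ᵥ x) ⬝ᵥ
      (star (hA.eigenvectorUnitary : Matrix n n ℝ) *ᵥ y) = x ⬝ᵥ y := by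
  rw [dotProduct_mulVec, ← vecMul_transpose, vecMul_vecMul, star_eq_conjTranspose,
    conjTranspose_eq_transpose_of_trivial, transpose_transpose,
    ← conjTranspose_eq_transpose_of_trivial, ← star_eq_conjTranspose,
    Unitary.mul_star_self_of_mem hA.eigenvectorUnitary.2, vecMul_one]

lemma star_eigenvectorUnitary_mulVec_mulVec (x : n → ℝ) :
    star (hA.eigenvectorUnitary : Matrix n n ℝ) *ᵥ (A *ᵥ x) =
      diagonal hA.eigenvalues *ᵥ (star (hA.eigenvectorUnitary : Matrix n n ℝ) *ᵥ x) := by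
  have h := hA.conjStarAlgAut_star_eigenvectorUnitary
  rw [Unitary.conjStarAlgAut_star_apply] at h
  simp only [RCLike.ofReal_real_eq_id, Function.id_comp] at h
  rw [mulVec_mulVec, mulVec_mulVec, ← h, mul_assoc _ _ (star _),
    Unitary.mul_star_self_of_mem hA.eigenvectorUnitary.2, mul_one]

lemma dotProduct_self_eq_sum (x : n → ℝ) :
    x ⬝ᵥ x = ∑ j, (star (hA.eigenvectorUnitary : Matrix n n ℝ) *ᵥ x) j ^ 2 := by
  rw [← hA.star_eigenvectorUnitary_mulVec_dotProduct]
  simp only [dotProduct, sq]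

lemma dotProduct_mulVec_eq_sum (x : n → ℝ) :
    x ⬝ᵥ (A *ᵥ x) = ∑ j, hA.eigenvalues j *
      (star (hA.eigenvectorUnitary : Matrix n n ℝ) *ᵥ x) j ^ 2 := by
  rw [← hA.star_eigenvectorUnitary_mulVec_dotProduct, star_eigenvectorUnitary_mulVec_mulVec]
  simp only [dotProduct, mulVec_diagonal]
  exact Finset.sum_congr rfl fun j _ => by ring

lemma mulVec_dotProduct_mulVec_eq_sum (x : n → ℝ) :
    (A *ᵥ x) ⬝ᵥ (A *ᵥ x) = ∑ j, hA.eigenvalues j ^ 2 *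
      (star (hA.eigenvectorUnitary : Matrix n n ℝ) *ᵥ x) j ^ 2 := by
  rw [← hA.star_eigenvectorUnitary_mulVec_dotProduct, star_eigenvectorUnitary_mulVec_mulVec]
  simp only [dotProduct, mulVec_diagonal]
  exact Finset.sum_congr rfl fun j _ => by ring

lemma iInf_eigenvalues_mul_dotProduct_self_le (x : n → ℝ) :
    (⨅ j, hA.eigenvalues j) * (x ⬝ᵥ x) ≤ x ⬝ᵥ (A *ᵥ x) := by
  rw [hA.dotProduct_self_eq_sum, hA.dotProduct_mulVec_eq_sum, Finset.mul_sum]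
  gcongr with j
  exact ciInf_le (Set.finite_range _).bddBelow j

lemma dotProduct_mulVec_le_iSup_eigenvalues_mul (x : n → ℝ) :
    x ⬝ᵥ (A *ᵥ x) ≤ (⨆ j, hA.eigenvalues j) * (x ⬝ᵥ x) := by
  rw [hA.dotProduct_self_eq_sum, hA.dotProduct_mulVec_eq_sum, Finset.mul_sum]
  gcongr with j
  exact le_ciSup (Set.finite_range _).bddAbove j

end Matrix.IsHermitian

namespace Matrix.PosSemidef

variable {n : Type*} [Fintype n] {A : Matrix n n ℝ}

lemma dotProduct_mulVec_self_nonneg (hA : A.PosSemidef) (x : n → ℝ) : 0 ≤ x ⬝ᵥ (A *ᵥ x) := by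
  simpa using hA.dotProduct_mulVec_nonneg x

lemma mulVec_dotProduct_mulVec_le_iSup_eigenvalues_mul [DecidableEq n] (hA : A.PosSemidef)
    (x : n → ℝ) :
    (A *ᵥ x) ⬝ᵥ (A *ᵥ x) ≤ (⨆ j, hA.1.eigenvalues j) * (x ⬝ᵥ (A *ᵥ x)) := by
  rw [hA.1.mulVec_dotProduct_mulVec_eq_sum, hA.1.dotProduct_mulVec_eq_sum, Finset.mul_sum]
  refine Finset.sum_le_sum fun j _ => ?_
  rw [sq, mul_assoc]
  exact mul_le_mul_of_nonneg_right (le_ciSup (Set.finite_range _).bddAbove j)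
    (mul_nonneg (hA.eigenvalues_nonneg j) (sq_nonneg _))

end Matrix.PosSemidef

lemma Matrix.eigenvalues_conjTranspose_mul_self_eq {𝕜 : Type*} [RCLike 𝕜] {n : Type*} [Fintype n]
    [DecidableEq n] (L : Matrix n n 𝕜) :
    (isHermitian_conjTranspose_mul_self L).eigenvalues =
      (isHermitian_mul_conjTranspose_self L).eigenvalues :=
  (IsHermitian.eigenvalues_eq_eigenvalues_iff _ _).mpr (charpoly_mul_comm _ _)

section DotProduct

variable {n : Type*} [Fintype n]

lemma dotProduct_self_nonneg (x : n → ℝ) : 0 ≤ x ⬝ᵥ x := by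
  simpa using dotProduct_star_self_nonneg x

lemma dotProduct_self_pos {x : n → ℝ} (hx : x ≠ 0) : 0 < x ⬝ᵥ x := by
  simpa using dotProduct_star_self_pos_iff.mpr hx

lemma dotProduct_sq_le_dotProduct_self_mul (x y : n → ℝ) :
    (x ⬝ᵥ y) ^ 2 ≤ (x ⬝ᵥ x) * (y ⬝ᵥ y) := by
  simpa only [dotProduct, sq] using Finset.sum_mul_sq_le_sq_mul_sq Finset.univ x y

lemma dotProduct_mulVec_conjTranspose_mul_self (A : Matrix n n ℝ) (x : n → ℝ) :
    x ⬝ᵥ ((Aᴴ * A) *ᵥ x) = (A *ᵥ x) ⬝ᵥ (A *ᵥ x) := by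
  rw [← mulVec_mulVec, dotProduct_mulVec, conjTranspose_eq_transpose_of_trivial,
    vecMul_transpose]

end DotProduct

-- The larger root of `(t - a) * (t + b) = s` in `t`.
noncomputable def largerRoot (a b s : ℝ) : ℝ := (a - b + √((a + b) ^ 2 + 4 * s)) / 2

lemma sq_two_mul_add_sub (a b t : ℝ) :
    (2 * t + b - a) ^ 2 = (a + b) ^ 2 + 4 * ((t - a) * (t + b)) := by ring

lemma largerRoot_le {a b s t : ℝ} (hs : 0 ≤ s) (hb : 0 < t + b) (h : s ≤ (t - a) * (t + b)) :
    largerRoot a b s ≤ t := by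
  have ha : 0 ≤ t - a := nonneg_of_mul_nonneg_left (hs.trans h) hb
  have : √((a + b) ^ 2 + 4 * s) ≤ 2 * t + b - a :=
    Real.sqrt_le_iff.mpr ⟨by linarith, by rw [sq_two_mul_add_sub]; linarith⟩
  unfold largerRoot
  linarith

lemma le_largerRoot {a b s t : ℝ} (h : (t - a) * (t + b) ≤ s) : t ≤ largerRoot a b s := by
  have : |2 * t + b - a| ≤ √((a + b) ^ 2 + 4 * s) :=
    Real.abs_le_sqrt (by rw [sq_two_mul_add_sub]; linarith)
  unfold largerRoot
  linarith [le_abs_self (2 * t + b - a)]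

section SaddlePoint

variable {n : Type*} [Fintype n]

lemma fromBlocks_mulVec_sum_elim_eq_smul_iff {R : Type*} [Ring R] [StarRing R]
    {D L G : Matrix n n R} {ζ : R} {x y : n → R} :
    fromBlocks D L Lᴴ (-G) *ᵥ Sum.elim x y = ζ • Sum.elim x y ↔
      D *ᵥ x + L *ᵥ y = ζ • x ∧ Lᴴ *ᵥ x = ζ • y + G *ᵥ y := by
  rw [fromBlocks_mulVec, Sum.elim_comp_inl, Sum.elim_comp_inr,
    ← Sum.elim_comp_inl_inr (ζ • Sum.elim x y), Sum.elim_eq_iff, neg_mulVec, ← sub_eq_add_neg,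
    sub_eq_iff_eq_add]
  rfl

variable {D L G : Matrix n n ℝ} {ζ : ℝ} {x y : n → ℝ}

lemma dotProduct_mulVec_eq_of_conjTranspose_mulVec_eq (h : Lᴴ *ᵥ x = ζ • y + G *ᵥ y) :
    x ⬝ᵥ (L *ᵥ y) = ζ * (y ⬝ᵥ y) + y ⬝ᵥ (G *ᵥ y) := by
  rw [dotProduct_mulVec, ← mulVec_transpose, ← conjTranspose_eq_transpose_of_trivial, h,
    add_dotProduct, smul_dotProduct, smul_eq_mul, dotProduct_comm (G *ᵥ y)]

lemma dotProduct_mulVec_add_eq_of_mulVec_add_eq (h : D *ᵥ x + L *ᵥ y = ζ • x) :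
    x ⬝ᵥ (D *ᵥ x) + x ⬝ᵥ (L *ᵥ y) = ζ * (x ⬝ᵥ x) := by
  rw [← dotProduct_add, h, dotProduct_smul, smul_eq_mul]

lemma fst_ne_zero_of_fromBlocks_mulVec_eq_smul (hG : G.PosSemidef) (hζ : 0 < ζ)
    (hv : fromBlocks D L Lᴴ (-G) *ᵥ Sum.elim x y = ζ • Sum.elim x y)
    (hxy : Sum.elim x y ≠ 0) : x ≠ 0 := by
  rintro rfl
  have hcoupling := dotProduct_mulVec_eq_of_conjTranspose_mulVec_eq
    (fromBlocks_mulVec_sum_elim_eq_smul_iff.mp hv).2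
  rw [zero_dotProduct] at hcoupling
  have hy : y ⬝ᵥ y = 0 := by
    nlinarith [hG.dotProduct_mulVec_self_nonneg y, dotProduct_self_nonneg y]
  rw [dotProduct_self_eq_zero] at hy
  exact hxy (by rw [hy]; exact Sum.elim_zero_zero)

variable [DecidableEq n]

lemma iInf_eigenvalues_conjTranspose_mul_self_le_of_fromBlocks_mulVec_eq_smul
    (hD : D.IsHermitian) (hG : G.PosSemidef) (hζ : 0 < ζ) (hx : x ≠ 0)
    (hv : fromBlocks D L Lᴴ (-G) *ᵥ Sum.elim x y = ζ • Sum.elim x y) :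
    ⨅ j, (isHermitian_conjTranspose_mul_self L).eigenvalues j ≤
      (ζ - ⨅ j, hD.eigenvalues j) * (ζ + ⨆ j, hG.1.eigenvalues j) := by
  obtain ⟨h₁, h₂⟩ := fromBlocks_mulVec_sum_elim_eq_smul_iff.mp hv
  have hp := dotProduct_mulVec_eq_of_conjTranspose_mulVec_eq h₂
  have hd := dotProduct_mulVec_add_eq_of_mulVec_add_eq h₁
  have hσ := (isHermitian_mul_conjTranspose_self L).iInf_eigenvalues_mul_dotProduct_self_le x
  have hLx : x ⬝ᵥ ((L * Lᴴ) *ᵥ x) = (Lᴴ *ᵥ x) ⬝ᵥ (Lᴴ *ᵥ x) := by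
    simpa using dotProduct_mulVec_conjTranspose_mul_self Lᴴ x
  rw [← eigenvalues_conjTranspose_mul_self_eq, hLx, h₂] at hσ
  have hψ := hD.iInf_eigenvalues_mul_dotProduct_self_le x
  have hg := hG.1.dotProduct_mulVec_le_iSup_eigenvalues_mul y
  have hGy := hG.mulVec_dotProduct_mulVec_le_iSup_eigenvalues_mul y
  have hν : 0 ≤ ⨆ j, hG.1.eigenvalues j := Real.iSup_nonneg hG.eigenvalues_nonneg
  have hexp : (ζ • y + G *ᵥ y) ⬝ᵥ (ζ • y + G *ᵥ y) =
      ζ ^ 2 * (y ⬝ᵥ y) + 2 * ζ * (y ⬝ᵥ (G *ᵥ y)) + (G *ᵥ y) ⬝ᵥ (G *ᵥ y) := by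
    simp only [add_dotProduct, dotProduct_add, smul_dotProduct, dotProduct_smul, smul_eq_mul,
      dotProduct_comm (G *ᵥ y) y]
    ring
  set σ := ⨅ j, (isHermitian_conjTranspose_mul_self L).eigenvalues j
  set ψ := ⨅ j, hD.eigenvalues j
  set ν := ⨆ j, hG.1.eigenvalues j
  refine le_of_mul_le_mul_right ?_ (dotProduct_self_pos hx)
  calc σ * (x ⬝ᵥ x)
      ≤ ζ ^ 2 * (y ⬝ᵥ y) + 2 * ζ * (y ⬝ᵥ (G *ᵥ y)) + (G *ᵥ y) ⬝ᵥ (G *ᵥ y) := hexp ▸ hσ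
    _ ≤ (ζ + ν) * (ζ * (y ⬝ᵥ y) + y ⬝ᵥ (G *ᵥ y)) := by
        nlinarith [mul_le_mul_of_nonneg_left hg hζ.le]
    _ = (ζ + ν) * (x ⬝ᵥ (L *ᵥ y)) := by rw [hp]
    _ ≤ (ζ + ν) * ((ζ - ψ) * (x ⬝ᵥ x)) := by gcongr; linarith
    _ = (ζ - ψ) * (ζ + ν) * (x ⬝ᵥ x) := by ring

lemma mul_le_iSup_eigenvalues_conjTranspose_mul_self_of_fromBlocks_mulVec_eq_smul
    (hD : D.IsHermitian) (hG : G.PosSemidef) (hζ : 0 < ζ) (hx : x ≠ 0)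
    (hv : fromBlocks D L Lᴴ (-G) *ᵥ Sum.elim x y = ζ • Sum.elim x y) :
    (ζ - ⨆ j, hD.eigenvalues j) * (ζ + ⨅ j, hG.1.eigenvalues j) ≤
      ⨆ j, (isHermitian_conjTranspose_mul_self L).eigenvalues j := by
  obtain ⟨h₁, h₂⟩ := fromBlocks_mulVec_sum_elim_eq_smul_iff.mp hv
  have hp := dotProduct_mulVec_eq_of_conjTranspose_mulVec_eq h₂
  have hd := dotProduct_mulVec_add_eq_of_mulVec_add_eq h₁
  have hψ := hD.dotProduct_mulVec_le_iSup_eigenvalues_mul x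
  have hg := hG.1.iInf_eigenvalues_mul_dotProduct_self_le y
  have hLy := (isHermitian_conjTranspose_mul_self L).dotProduct_mulVec_le_iSup_eigenvalues_mul y
  rw [dotProduct_mulVec_conjTranspose_mul_self] at hLy
  have hCS := dotProduct_sq_le_dotProduct_self_mul x (L *ᵥ y)
  have ha := dotProduct_self_pos hx
  have hb := dotProduct_self_nonneg y
  have hν : 0 ≤ ⨅ j, hG.1.eigenvalues j := Real.iInf_nonneg hG.eigenvalues_nonneg
  have hσ : 0 ≤ ⨆ j, (isHermitian_conjTranspose_mul_self L).eigenvalues j :=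
    Real.iSup_nonneg (eigenvalues_conjTranspose_mul_self_nonneg L)
  set σ := ⨆ j, (isHermitian_conjTranspose_mul_self L).eigenvalues j
  set ψ := ⨆ j, hD.eigenvalues j
  set ν := ⨅ j, hG.1.eigenvalues j
  set p := x ⬝ᵥ (L *ᵥ y)
  set a := x ⬝ᵥ x
  set b := y ⬝ᵥ y
  rcases le_or_gt ζ ψ with hζψ | hψζ
  · nlinarith
  have hpa : (ζ - ψ) * a ≤ p := by linarith
  have hp0 : 0 < p := (mul_pos (sub_pos.mpr hψζ) ha).trans_le hpa
  refine le_of_mul_le_mul_right ?_ (mul_pos ha hp0)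
  calc (ζ - ψ) * (ζ + ν) * (a * p)
      = (ζ + ν) * p * ((ζ - ψ) * a) := by ring
    _ ≤ (ζ + ν) * p * p := by gcongr
    _ = (ζ + ν) * p ^ 2 := by ring
    _ ≤ (ζ + ν) * (a * (σ * b)) := by gcongr; exact hCS.trans (by gcongr)
    _ = σ * a * ((ζ + ν) * b) := by ring
    _ ≤ σ * a * p := by gcongr; linarith
    _ = σ * (a * p) := by ring

end SaddlePoint

theorem A2_pos_eig_bounds_general {m : ℕ}
    (D L G : Matrix (Fin m) (Fin m) ℝ) (hD : D.PosDef) (hG : G.PosSemidef)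
    (hA2 : (Matrix.fromBlocks D L Lᴴ (-G)).IsHermitian)
    (ψmin ψmax νmin νmax σmin σmax : ℝ)
    (hψmin : ψmin = ⨅ i, hD.isHermitian.eigenvalues i)
    (hψmax : ψmax = ⨆ i, hD.isHermitian.eigenvalues i)
    (hνmin : νmin = ⨅ i, hG.isHermitian.eigenvalues i)
    (hνmax : νmax = ⨆ i, hG.isHermitian.eigenvalues i)
    (hσmin : σmin = Real.sqrt (⨅ i, (isHermitian_conjTranspose_mul_self L).eigenvalues i))
    (hσmax : σmax = Real.sqrt (⨆ i, (isHermitian_conjTranspose_mul_self L).eigenvalues i)) :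
    ∀ i, 0 < hA2.eigenvalues i →
      (ψmin - νmax + Real.sqrt ((ψmin + νmax) ^ 2 + 4 * σmin ^ 2)) / 2 ≤ hA2.eigenvalues i ∧
        hA2.eigenvalues i ≤
          (ψmax - νmin + Real.sqrt ((ψmax + νmin) ^ 2 + 4 * σmax ^ 2)) / 2 := by
  intro i hζ
  have hv := hA2.mulVec_eigenvectorBasis i
  rw [← Sum.elim_comp_inl_inr (hA2.eigenvectorBasis i).ofLp] at hv
  have hx := fst_ne_zero_of_fromBlocks_mulVec_eq_smul hG hζ hv <| by
    rw [Sum.elim_comp_inl_inr]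
    exact (WithLp.ofLp_eq_zero 2).not.mpr (hA2.eigenvectorBasis.orthonormal.ne_zero i)
  have hσ₀ : 0 ≤ ⨅ i, (isHermitian_conjTranspose_mul_self L).eigenvalues i :=
    Real.iInf_nonneg (eigenvalues_conjTranspose_mul_self_nonneg L)
  have hσ₁ : 0 ≤ ⨆ i, (isHermitian_conjTranspose_mul_self L).eigenvalues i :=
    Real.iSup_nonneg (eigenvalues_conjTranspose_mul_self_nonneg L)
  have hν : 0 ≤ νmax := hνmax ▸ Real.iSup_nonneg hG.eigenvalues_nonneg
  rw [hσmin, hσmax, Real.sq_sqrt hσ₀, Real.sq_sqrt hσ₁]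
  subst hψmin hψmax hνmin hνmax
  exact ⟨largerRoot_le hσ₀ (by linarith)
      (iInf_eigenvalues_conjTranspose_mul_self_le_of_fromBlocks_mulVec_eq_smul
        hD.isHermitian hG hζ hx hv),
    le_largerRoot (mul_le_iSup_eigenvalues_conjTranspose_mul_self_of_fromBlocks_mulVec_eq_smul
      hD.isHermitian hG hζ hx hv)⟩

/-- Bounds on the positive eigenvalues of `A₂ = [[D, L], [Lᵀ, −G]]`, with `D` SPD (extreme
eigenvalues `ψ_min, ψ_max`), `L` invertible with extreme singular values `σ_min, σ_max`, and
`G` PSD (extreme eigenvalues `ν_min, ν_max`): every positive eigenvalue `ζ` satisfies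
`(ψ_min − ν_max + sqrt((ψ_min + ν_max)² + 4σ_min²))/2 ≤ ζ ≤
 (ψ_max − ν_min + sqrt((ψ_max + ν_min)² + 4σ_max²))/2`. -/
theorem A2_pos_eig_bounds {m : ℕ}
    (D L G : Matrix (Fin m) (Fin m) ℝ) (hD : D.PosDef) (hG : G.PosSemidef) (hL : IsUnit L)
    (hA2 : (Matrix.fromBlocks D L Lᴴ (-G)).IsHermitian)
    (ψmin ψmax νmin νmax σmin σmax : ℝ)
    (hψmin : ψmin = ⨅ i, hD.isHermitian.eigenvalues i)
    (hψmax : ψmax = ⨆ i, hD.isHermitian.eigenvalues i)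
    (hνmin : νmin = ⨅ i, hG.isHermitian.eigenvalues i)
    (hνmax : νmax = ⨆ i, hG.isHermitian.eigenvalues i)
    (hσmin : σmin = Real.sqrt (⨅ i, (isHermitian_conjTranspose_mul_self L).eigenvalues i))
    (hσmax : σmax = Real.sqrt (⨆ i, (isHermitian_conjTranspose_mul_self L).eigenvalues i)) :
    ∀ i, 0 < hA2.eigenvalues i →
      (ψmin - νmax + Real.sqrt ((ψmin + νmax) ^ 2 + 4 * σmin ^ 2)) / 2 ≤ hA2.eigenvalues i ∧
        hA2.eigenvalues i ≤
          (ψmax - νmin + Real.sqrt ((ψmax + νmin) ^ 2 + 4 * σmax ^ 2)) / 2 :=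
  A2_pos_eig_bounds_general D L G hD hG hA2 ψmin ψmax νmin νmax σmin σmax hψmin hψmax hνmin hνmax
    hσmin hσmax
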